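/- arXiv:2501.11871 — 4 statements merged into one kernel-verified Lean document; each statement's English description precedes it below -/
import Mathlib

section
/- Let p₁, p₂, p₃ be three affinely independent (noncollinear) points in a real inner product space, let α₁, α₂, α₃ be the interior angles of the triangle at p₁, p₂, p₃ respectively, and let A = (1/2)·‖p₂ - p₁‖·‖p₃ - p₁‖·sin α₁ be the area of the triangle. Then A = (1/4)·( cot α₁ · ‖p₃ - p₂‖² + cot α₂ · ‖p₁ - p₃‖² + cot α₃ · ‖p₂ - p₁‖² ). -/
open Real InnerProductGeometry
open scoped RealInnerProductSpace

/-- The area of a triangle with noncollinear vertices `p₁ p₂ p₃` equals the cotangent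
formula `(1/4)·(cot α₁ ‖p₃-p₂‖² + cot α₂ ‖p₁-p₃‖² + cot α₃ ‖p₂-p₁‖²)`. -/
theorem triangle_area_cotangent_formula {V : Type*} [NormedAddCommGroup V]
    [InnerProductSpace ℝ V] (p₁ p₂ p₃ : V)
    (h : ¬ Collinear ℝ ({p₁, p₂, p₃} : Set V)) :
    (1/2 : ℝ) * ‖p₂ - p₁‖ * ‖p₃ - p₁‖ * Real.sin (angle (p₂ - p₁) (p₃ - p₁)) =
      (1/4 : ℝ) * (Real.cot (angle (p₂ - p₁) (p₃ - p₁)) * ‖p₃ - p₂‖ ^ 2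
        + Real.cot (angle (p₃ - p₂) (p₁ - p₂)) * ‖p₁ - p₃‖ ^ 2
        + Real.cot (angle (p₁ - p₃) (p₂ - p₃)) * ‖p₂ - p₁‖ ^ 2) := by
  have h213 : ¬ Collinear ℝ ({p₂, p₁, p₃} : Set V) := by
    rwa [Set.insert_comm]
  have h321 : ¬ Collinear ℝ ({p₃, p₂, p₁} : Set V) := by
    have : ({p₃, p₂, p₁} : Set V) = {p₁, p₂, p₃} := by
      ext x; simp; tauto
    rwa [this]
  have h132 : ¬ Collinear ℝ ({p₁, p₃, p₂} : Set V) := by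
    have : ({p₁, p₃, p₂} : Set V) = {p₁, p₂, p₃} := by
      ext x; simp; tauto
    rwa [this]
  have hs₁ : 0 < Real.sin (angle (p₂ - p₁) (p₃ - p₁)) := by
    have := EuclideanGeometry.sin_pos_of_not_collinear h213
    simpa [EuclideanGeometry.angle, vsub_eq_sub] using this
  have hs₂ : 0 < Real.sin (angle (p₃ - p₂) (p₁ - p₂)) := by
    have := EuclideanGeometry.sin_pos_of_not_collinear h321
    simpa [EuclideanGeometry.angle, vsub_eq_sub] using this
  have hs₃ : 0 < Real.sin (angle (p₁ - p₃) (p₂ - p₃)) := by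
    have := EuclideanGeometry.sin_pos_of_not_collinear h132
    simpa [EuclideanGeometry.angle, vsub_eq_sub] using this
  set a := p₂ - p₁ with ha
  set b := p₃ - p₁ with hb
  have hba : p₃ - p₂ = b - a := by rw [ha, hb]; abel
  have hab2 : p₁ - p₂ = -a := by rw [ha]; abel
  have hb3 : p₁ - p₃ = -b := by rw [hb]; abel
  have ha3 : p₂ - p₃ = a - b := by rw [ha, hb]; abel
  set t : ℝ := ⟪a, b⟫ with ht
  set S : ℝ := Real.sin (angle a b) * (‖a‖ * ‖b‖) with hS
  have hSsqrt : S = √(⟪a, a⟫ * ⟪b, b⟫ - ⟪a, b⟫ * ⟪a, b⟫) :=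
    sin_angle_mul_norm_mul_norm a b
  have hS2 : S ^ 2 = ‖a‖ ^ 2 * ‖b‖ ^ 2 - t ^ 2 := by
    rw [hSsqrt, sq, Real.mul_self_sqrt (by
      have := real_inner_mul_inner_self_le a b; linarith)]
    rw [real_inner_self_eq_norm_sq, real_inner_self_eq_norm_sq, ht]; ring
  -- the "sine times norms" quantity is the same at all three vertices
  have hS₂eq : Real.sin (angle (b - a) (-a)) * (‖b - a‖ * ‖-a‖) = S := by
    rw [sin_angle_mul_norm_mul_norm, hSsqrt]
    congr 1
    simp only [inner_sub_left, inner_sub_right, inner_neg_left, inner_neg_right,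
      real_inner_comm b a]
    ring
  have hS₃eq : Real.sin (angle (-b) (a - b)) * (‖-b‖ * ‖a - b‖) = S := by
    rw [sin_angle_mul_norm_mul_norm, hSsqrt]
    congr 1
    simp only [inner_sub_left, inner_sub_right, inner_neg_left, inner_neg_right,
      real_inner_comm b a]
    ring
  have hSpos : 0 < S := by
    rw [hS]
    have hane : a ≠ 0 := by
      intro h0
      apply h
      have he : p₂ = p₁ := by rwa [ha, sub_eq_zero] at h0
      rw [he]
      exact (collinear_pair ℝ p₁ p₃).subset (by intro x hx; simp only [Set.mem_insert_iff, Set.mem_singleton_iff] at hx ⊢; tauto)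
    have hbne : b ≠ 0 := by
      intro h0
      apply h
      have he : p₃ = p₁ := by rwa [hb, sub_eq_zero] at h0
      rw [he]
      exact (collinear_pair ℝ p₁ p₂).subset (by intro x hx; simp only [Set.mem_insert_iff, Set.mem_singleton_iff] at hx ⊢; tauto)
    exact mul_pos hs₁ (mul_pos (norm_pos_iff.mpr hane) (norm_pos_iff.mpr hbne))
  -- cotangent formulas
  have hcot₁ : Real.cot (angle a b) = t / S := by
    rw [Real.cot_eq_cos_div_sin, cos_angle, div_div, hS, mul_comm]
  have hcot₂ : Real.cot (angle (b - a) (-a)) = (‖a‖ ^ 2 - t) / S := by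
    rw [Real.cot_eq_cos_div_sin, cos_angle, div_div, ← hS₂eq, mul_comm]
    congr 1
    simp only [inner_sub_left, inner_neg_right, real_inner_self_eq_norm_sq,
      real_inner_comm b a, ht]
    ring
  have hcot₃ : Real.cot (angle (-b) (a - b)) = (‖b‖ ^ 2 - t) / S := by
    rw [Real.cot_eq_cos_div_sin, cos_angle, div_div, ← hS₃eq, mul_comm]
    congr 1
    simp only [inner_sub_right, inner_neg_left, real_inner_self_eq_norm_sq,
      real_inner_comm b a, ht]
    ring
  have hside : ‖b - a‖ ^ 2 = ‖b‖ ^ 2 - 2 * t + ‖a‖ ^ 2 := by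
    rw [norm_sub_sq_real, real_inner_comm a b, ← ht]
  rw [hba, hab2, hb3, ha3, hcot₁, hcot₂, hcot₃, hside, norm_neg,
    show ((1:ℝ)/2) * ‖a‖ * ‖b‖ * Real.sin (angle a b) = S / 2 by rw [hS]; ring]
  field_simp
  nlinarith [hS2, hSpos]
end

section
/- Let v_i, v_j, v_k be three noncollinear points in ℝ³, let s be the unit normal s = ((v_j - v_i) × (v_k - v_i)) / ‖(v_j - v_i) × (v_k - v_i)‖, define the conormal vectors n_i = s × (v_k - v_j) and n_j = s × (v_i - v_k), let A = (1/2)·‖(v_j - v_i) × (v_k - v_i)‖ be the area of the triangle, and let θ_k be the interior angle of the triangle at v_k. Then −⟨n_i, n_j⟩ / (4A) = (1/2)·cot θ_k. -/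
open Real InnerProductGeometry

/-- The cross product on `ℝ³ = EuclideanSpace ℝ (Fin 3)`. -/
noncomputable def cross3 (u v : EuclideanSpace ℝ (Fin 3)) : EuclideanSpace ℝ (Fin 3) :=
  (EuclideanSpace.equiv (Fin 3) ℝ).symm
    (crossProduct ((EuclideanSpace.equiv (Fin 3) ℝ) u) ((EuclideanSpace.equiv (Fin 3) ℝ) v))

/-!
Put `a = vᵢ - vₖ` and `b = vⱼ - vₖ`. The normal `(vⱼ - vᵢ) × (vₖ - vᵢ)` equals `a × b`, whose norm
is `‖a‖‖b‖ sin θₖ = 2A`, and `s ⟂ a`. Since `nᵢ = -(s × b)` and `nⱼ = s × a`, the Binet–Cauchy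
identity gives `-⟨nᵢ, nⱼ⟩ = ‖s‖²⟨b, a⟩ - ⟨s, a⟩⟨b, s⟩ = ⟨a, b⟩ = ‖a‖‖b‖ cos θₖ`.
-/

open Matrix

section Cross3

variable (u v w x : EuclideanSpace ℝ (Fin 3))

local notation "e" => EuclideanSpace.equiv (Fin 3) ℝ

theorem EuclideanSpace.inner_eq_dotProduct_equiv {ι : Type*} [Fintype ι]
    (u v : EuclideanSpace ℝ ι) :
    inner ℝ u v = EuclideanSpace.equiv ι ℝ u ⬝ᵥ EuclideanSpace.equiv ι ℝ v :=
  dotProduct_comm _ _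

theorem equiv_cross3 : e (cross3 u v) = e u ⨯₃ e v :=
  (EuclideanSpace.equiv (Fin 3) ℝ).apply_symm_apply _

theorem inner_cross3_cross3 :
    inner ℝ (cross3 u v) (cross3 w x) =
      inner ℝ u w * inner ℝ v x - inner ℝ u x * inner ℝ v w := by
  simp only [EuclideanSpace.inner_eq_dotProduct_equiv, equiv_cross3, cross_dot_cross]

theorem inner_self_cross3 : inner ℝ u (cross3 u v) = 0 := by
  rw [EuclideanSpace.inner_eq_dotProduct_equiv, equiv_cross3, dot_self_cross]

theorem cross3_neg_right : cross3 u (-v) = -cross3 u v := by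
  simp only [cross3, map_neg]

theorem norm_cross3 : ‖cross3 u v‖ = ‖u‖ * ‖v‖ * sin (angle u v) :=
  norm_ofLp_crossProduct u v

theorem cross3_sub_sub (p q r : EuclideanSpace ℝ (Fin 3)) :
    cross3 (q - p) (r - p) = cross3 (p - r) (q - r) := by
  simp only [cross3, map_sub, LinearMap.sub_apply, cross_self]
  rw [← cross_anticomm (e p) (e q), ← cross_anticomm (e q) (e r), map_neg, map_neg]
  abel

theorem inner_cross3_cross3_of_norm_eq_one {s : EuclideanSpace ℝ (Fin 3)} (hs : ‖s‖ = 1)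
    (hv : inner ℝ s v = 0) :
    inner ℝ (cross3 s u) (cross3 s v) = inner ℝ u v := by
  rw [inner_cross3_cross3, hv, zero_mul, sub_zero, real_inner_self_eq_norm_sq, hs, one_pow,
    one_mul]

end Cross3

/-- For a noncollinear triangle `[vᵢ, vⱼ, vₖ]` in `ℝ³` with unit normal `s`, conormal
vectors `nᵢ = s × (vₖ - vⱼ)`, `nⱼ = s × (vᵢ - vₖ)`, and area `A`, one has
`-⟨nᵢ, nⱼ⟩ / (4A) = (1/2)·cot θₖ` where `θₖ` is the interior angle at `vₖ`. -/
theorem cotangent_weight_eq_neg_inner_conormal (vi vj vk : EuclideanSpace ℝ (Fin 3))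
    (h : ¬ Collinear ℝ ({vi, vj, vk} : Set (EuclideanSpace ℝ (Fin 3)))) :
    let s := ‖cross3 (vj - vi) (vk - vi)‖⁻¹ • cross3 (vj - vi) (vk - vi)
    let ni := cross3 s (vk - vj)
    let nj := cross3 s (vi - vk)
    let A := (1/2 : ℝ) * ‖cross3 (vj - vi) (vk - vi)‖;
    -(inner ℝ ni nj : ℝ) / (4 * A) =
      (1/2 : ℝ) * Real.cot (angle (vi - vk) (vj - vk)) := by
  intro s ni nj A
  set a := vi - vk
  set b := vj - vk
  have hnormal : cross3 (vj - vi) (vk - vi) = cross3 a b := cross3_sub_sub vi vj vk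
  have ha : ‖a‖ ≠ 0 := norm_ne_zero_iff.2 (sub_ne_zero.2 (ne₁₃_of_not_collinear h))
  have hb : ‖b‖ ≠ 0 := norm_ne_zero_iff.2 (sub_ne_zero.2 (ne₂₃_of_not_collinear h))
  have hsin : sin (angle a b) ≠ 0 := by
    rw [Set.pair_comm] at h
    exact (EuclideanGeometry.sin_pos_of_not_collinear h).ne'
  have hc : cross3 (vj - vi) (vk - vi) ≠ 0 := by
    rw [hnormal, ← norm_ne_zero_iff, norm_cross3]
    exact mul_ne_zero (mul_ne_zero ha hb) hsin
  have hs : ‖s‖ = 1 := norm_smul_inv_norm hc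
  have hsa : inner ℝ s a = 0 := by
    rw [real_inner_smul_left, real_inner_comm, hnormal, inner_self_cross3, mul_zero]
  have hconormal : -(inner ℝ ni nj : ℝ) = inner ℝ a b := by
    rw [show ni = -cross3 s b by rw [← cross3_neg_right, neg_sub], inner_neg_left, neg_neg,
      inner_cross3_cross3_of_norm_eq_one b a hs hsa, real_inner_comm]
  have harea : A = ‖a‖ * ‖b‖ * sin (angle a b) / 2 := by
    simp only [A, hnormal, norm_cross3]; ring
  rw [hconormal, ← cos_angle_mul_norm_mul_norm, harea, cot_eq_cos_div_sin]
  field_simp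
  ring
end

section
/- Let n ≥ 2 be a natural number and define F_n(θ) = (1/(n − 1)) · ( (1 − cos θ)/ sin θ )ⁿ · ( sin((π − θ)/2) )^{n+1} for θ ∈ (0, π). Then the quotient ( e^{−F_n(θ)}·(cos θ + sin θ) − (cos θ + sin θ) ) / θⁿ tends to −1/(2ⁿ·(n − 1)) as θ tends to 0 from the right. -/
/-- The general associated discrete mean curvature with exponent `n`. -/
noncomputable def assocMeanCurv (n : ℕ) (θ : ℝ) : ℝ :=
  (1 / ((n : ℝ) - 1)) * ((1 - Real.cos θ) / Real.sin θ) ^ n *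
    (Real.sin ((Real.pi - θ) / 2)) ^ (n + 1)

/-!
Since `(1 - cos θ) / sin θ = tan (θ / 2)` and `sin ((π - θ) / 2) = cos (θ / 2)`, the curvature
`F_n(θ)` is asymptotic to `θⁿ / (2ⁿ (n - 1))` at `0`. As `eˣ - 1 ~ x`, the numerator
`(e^{-F_n(θ)} - 1)(cos θ + sin θ)` is asymptotic to `-θⁿ / (2ⁿ (n - 1))`, because
`cos θ + sin θ → 1`.
-/

open Real Filter Topology Asymptotics

namespace Real

theorem isEquivalent_exp_sub_one : (fun x => exp x - 1) ~[𝓝 0] id := by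
  simpa using! (hasDerivAt_exp 0).isLittleO

theorem isEquivalent_tan : tan ~[𝓝 0] id := by
  simpa using! (hasDerivAt_tan (x := 0) (by simp)).isLittleO

/-- Valid for every `x`: where `sin x = 0`, both sides vanish because `y / 0 = 0`. -/
theorem one_sub_cos_div_sin (x : ℝ) : (1 - cos x) / sin x = tan (x / 2) := by
  have h_cos : 1 - cos x = 2 * sin (x / 2) * sin (x / 2) := by
    have := cos_sq (x / 2)
    rw [mul_div_cancel₀ x two_ne_zero] at this
    nlinarith [sin_sq_add_cos_sq (x / 2)]
  have h_sin : sin x = 2 * sin (x / 2) * cos (x / 2) := by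
    rw [← sin_two_mul, mul_div_cancel₀ x two_ne_zero]
  rw [h_cos, h_sin, tan_eq_sin_div_cos]
  rcases eq_or_ne (sin (x / 2)) 0 with h | h
  · simp [h]
  · exact mul_div_mul_left _ _ (mul_ne_zero two_ne_zero h)

end Real

theorem assocMeanCurv_eq_tan_half (n : ℕ) (θ : ℝ) :
    assocMeanCurv n θ = 1 / ((n : ℝ) - 1) * tan (θ / 2) ^ n * cos (θ / 2) ^ (n + 1) := by
  rw [assocMeanCurv, one_sub_cos_div_sin, sub_div, sin_pi_div_two_sub]

theorem isEquivalent_assocMeanCurv (n : ℕ) :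
    assocMeanCurv n ~[𝓝 0] fun θ => θ ^ n / (2 ^ n * ((n : ℝ) - 1)) := by
  have h_half : Tendsto (fun θ : ℝ => θ / 2) (𝓝 0) (𝓝 0) := by
    simpa using (continuous_id.div_const (2 : ℝ)).tendsto 0
  have h_tan : (fun θ => tan (θ / 2)) ~[𝓝 0] fun θ => θ / 2 :=
    isEquivalent_tan.comp_tendsto h_half
  have h_cos : (fun θ => cos (θ / 2) ^ (n + 1)) ~[𝓝 0] fun _ => (1 : ℝ) := by
    refine (isEquivalent_const_iff_tendsto one_ne_zero).2 ?_
    simpa using (by fun_prop : Continuous fun θ : ℝ => cos (θ / 2) ^ (n + 1)).tendsto 0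
  have h_const : (fun _ : ℝ => 1 / ((n : ℝ) - 1)) ~[𝓝 0] fun _ => 1 / ((n : ℝ) - 1) :=
    IsEquivalent.refl
  convert (h_const.mul (h_tan.pow n)).mul h_cos using 1 <;> funext θ
  · exact assocMeanCurv_eq_tan_half n θ
  · show θ ^ n / (2 ^ n * ((n : ℝ) - 1)) = 1 / ((n : ℝ) - 1) * (θ / 2) ^ n * 1
    rw [div_pow, mul_comm (2 ^ n : ℝ), ← div_div]
    ring

theorem tendsto_assocMeanCurv_nhds_zero {n : ℕ} (hn : n ≠ 0) :
    Tendsto (assocMeanCurv n) (𝓝 0) (𝓝 0) := by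
  refine (isEquivalent_assocMeanCurv n).symm.tendsto_nhds ?_
  simpa [hn] using
    (by fun_prop : Continuous fun θ : ℝ => θ ^ n / (2 ^ n * ((n : ℝ) - 1))).tendsto 0

theorem isEquivalent_exp_neg_assocMeanCurv_sub_one {n : ℕ} (hn : n ≠ 0) :
    (fun θ => exp (-assocMeanCurv n θ) - 1) ~[𝓝 0]
      fun θ => -(θ ^ n / (2 ^ n * ((n : ℝ) - 1))) :=
  (isEquivalent_exp_sub_one.comp_tendsto
    (by simpa using (tendsto_assocMeanCurv_nhds_zero hn).neg)).trans
    (isEquivalent_assocMeanCurv n).neg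

theorem tendsto_exp_neg_assocMeanCurv_sub_one_div_pow {n : ℕ} (hn : n ≠ 0) :
    Tendsto (fun θ => (exp (-assocMeanCurv n θ) - 1) / θ ^ n) (𝓝[≠] 0)
      (𝓝 (-1 / (2 ^ n * ((n : ℝ) - 1)))) := by
  have h := ((isEquivalent_exp_neg_assocMeanCurv_sub_one hn).div
    (IsEquivalent.refl (u := fun θ : ℝ => θ ^ n))).mono (nhdsWithin_le_nhds (s := {0}ᶜ))
  refine h.symm.tendsto_nhds (tendsto_const_nhds.congr' ?_)
  filter_upwards [self_mem_nhdsWithin] with θ hθ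
  have : θ ^ n ≠ 0 := pow_ne_zero n hθ
  simp only [Pi.div_apply]
  field_simp

/-- The Möbius-transformed coordinate-sum difference
`(e^{-F_n(θ)}(cos θ + sin θ) - (cos θ + sin θ))/θⁿ` tends to `-1/(2ⁿ(n-1))` as `θ → 0⁺`. -/
theorem assocMeanCurv_moebius_difference (n : ℕ) (hn : 2 ≤ n) :
    Filter.Tendsto
      (fun θ : ℝ =>
        (Real.exp (-assocMeanCurv n θ) * (Real.cos θ + Real.sin θ) -
            (Real.cos θ + Real.sin θ)) / θ ^ n)
      (nhdsWithin 0 (Set.Ioi 0)) (nhds (-1 / (2 ^ n * ((n : ℝ) - 1)))) := by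
  have h_sum : Tendsto (fun θ => cos θ + sin θ) (𝓝[>] 0) (𝓝 1) :=
    ((continuous_cos.add continuous_sin).tendsto' 0 1 (by simp)).mono_left nhdsWithin_le_nhds
  have h_quot := (tendsto_exp_neg_assocMeanCurv_sub_one_div_pow (n := n) (by omega)).mono_left
    (nhdsGT_le_nhdsNE 0)
  simpa only [mul_one, sub_one_mul, div_mul_eq_mul_div] using h_quot.mul h_sum
end

section
/- Define g(θ) = (1/2)·sin(θ/2)·sin θ and h(θ) = e^{−g(θ)}·(cos θ + sin θ) for θ ∈ ℝ. Then h(0) = 1, the first derivative of h at 0 equals 1, the second derivative of h at 0 equals −3/2, and the third derivative of h at 0 equals −5/2. -/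
/-! Write `h = e^{-g} · (cos + sin)` and expand its derivatives at `0` by the Leibniz rule.
The derivatives of `cos + sin` at `0` are `1, 1, -1, -1`. Since `g` is even, so is `e^{-g}`,
whose odd derivatives at `0` therefore vanish; as `g'(0) = 0`, its second derivative there
is `-g''(0) = -1/2`. -/

open Real

theorem Function.Even.iteratedDeriv_eq_zero_of_odd {𝕜 F : Type*} [NontriviallyNormedField 𝕜]
    [NormedAddCommGroup F] [NormedSpace 𝕜 F] [IsAddTorsionFree F] {f : 𝕜 → F} (hf : f.Even)
    {n : ℕ} (hn : Odd n) : iteratedDeriv n f 0 = 0 := by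
  have h := iteratedDeriv_comp_neg n f 0
  rw [funext hf, neg_zero, hn.neg_one_pow, neg_one_smul] at h
  exact self_eq_neg.mp h

theorem iteratedDeriv_two_exp_comp {f : ℝ → ℝ} (hf : ContDiff ℝ 2 f) (x : ℝ) :
    iteratedDeriv 2 (fun y => exp (f y)) x = exp (f x) * (deriv f x ^ 2 + iteratedDeriv 2 f x) := by
  have hd : Differentiable ℝ f := hf.differentiable two_ne_zero
  have hd' : Differentiable ℝ (deriv f) := by
    simpa using hf.differentiable_iteratedDeriv 1 (by norm_num)
  have hexp : deriv (fun y => exp (f y)) = fun y => exp (f y) * deriv f y :=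
    funext fun y => ((hd y).hasDerivAt.exp).deriv
  rw [iteratedDeriv_succ, iteratedDeriv_one, hexp, iteratedDeriv_succ, iteratedDeriv_one,
    deriv_fun_mul ((hd x).hasDerivAt.exp.differentiableAt) (hd' x), ((hd x).hasDerivAt.exp).deriv]
  ring

theorem iteratedDeriv_cos_add_sin_zero (n : ℕ) :
    iteratedDeriv n (fun x => cos x + sin x) 0 = (-1) ^ (n / 2) := by
  induction n using Nat.twoStepInduction with
  | zero => simp
  | one => simp
  | more n ih _ =>
    rw [iteratedDeriv_fun_add (by fun_prop) (by fun_prop)] at ih ⊢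
    rw [show (n + 2) / 2 = n / 2 + 1 by omega, pow_succ, ← ih]
    simp only [iteratedDeriv_add_one_cos, iteratedDeriv_add_one_sin, Pi.neg_apply, mul_neg, mul_one,
      neg_add_rev]
    ring

theorem even_half_mul_sin_half_mul_sin :
    Function.Even fun θ : ℝ => 1 / 2 * sin (θ / 2) * sin θ :=
  fun θ => by simp [neg_div]

theorem iteratedDeriv_two_half_mul_sin_half_mul_sin_zero :
    iteratedDeriv 2 (fun θ : ℝ => 1 / 2 * sin (θ / 2) * sin θ) 0 = 1 / 2 := by
  rw [iteratedDeriv_fun_mul (by fun_prop) (by fun_prop)]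
  simp [Finset.sum_range_succ]

/-- Taylor data of `h(θ) = e^{-(1/2)sin(θ/2)sin θ}(cos θ + sin θ)` at `θ = 0`:
`h(0) = 1`, `h'(0) = 1`, `h''(0) = -3/2`, `h'''(0) = -5/2`. -/
theorem moebius_taylor_candidate_g :
    let g : ℝ → ℝ := fun θ => (1/2 : ℝ) * Real.sin (θ / 2) * Real.sin θ
    let h : ℝ → ℝ := fun θ => Real.exp (-g θ) * (Real.cos θ + Real.sin θ)
    h 0 = 1 ∧ deriv h 0 = 1 ∧ iteratedDeriv 2 h 0 = -3/2 ∧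
      iteratedDeriv 3 h 0 = -5/2 := by
  intro g h
  have hE : (fun θ => exp (-g θ)).Even :=
    even_half_mul_sin_half_mul_sin.left_comp fun x => exp (-x)
  have hE1 : iteratedDeriv 1 (fun θ => exp (-g θ)) 0 = 0 :=
    hE.iteratedDeriv_eq_zero_of_odd odd_one
  have hE3 : iteratedDeriv 3 (fun θ => exp (-g θ)) 0 = 0 :=
    hE.iteratedDeriv_eq_zero_of_odd (by decide)
  have hE2 : iteratedDeriv 2 (fun θ => exp (-g θ)) 0 = -1 / 2 := by
    rw [iteratedDeriv_two_exp_comp (by fun_prop), ← iteratedDeriv_one, iteratedDeriv_fun_neg,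
      iteratedDeriv_fun_neg, even_half_mul_sin_half_mul_sin.iteratedDeriv_eq_zero_of_odd odd_one,
      iteratedDeriv_two_half_mul_sin_half_mul_sin_zero]
    norm_num [g]
  have hLeibniz (n : ℕ) : iteratedDeriv n h 0 = ∑ i ∈ Finset.range (n + 1),
      n.choose i * iteratedDeriv i (fun θ => exp (-g θ)) 0 *
        iteratedDeriv (n - i) (fun θ => cos θ + sin θ) 0 :=
    iteratedDeriv_fun_mul (by fun_prop) (by fun_prop)
  rw [← iteratedDeriv_one]
  refine ⟨by simp [h, g], ?_, ?_, ?_⟩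
  all_goals
    simp only [hLeibniz, Finset.sum_range_succ, Finset.sum_range_zero, iteratedDeriv_zero, hE1, hE2,
      hE3, iteratedDeriv_cos_add_sin_zero]
    norm_num [g]
end
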